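/- arXiv:2103.09223 — 3 statements merged into one kernel-verified Lean document; each statement's English description precedes it below -/
import Mathlib

section
/- For every n ≥ 1 and every p : Fin n → ℝ², the Hausdorff distance between the polygonal curve C(p) and the segment joining its first and last vertices equals the maximum over all vertices of the distance to that segment: hausdorffDist (C(p)) (segment ℝ (p 0) (p (n−1))) = max_{i : Fin n} infDist (p i) (segment ℝ (p 0) (p (n−1))). -/
/-! Every point of the curve lies on a segment between two vertices, and the distance to the
convex set `[p₀, pₙ₋₁]` is a convex function, so it is bounded on the curve by its maximum over
the vertices; the vertices lie on the curve, so the maximum is also a lower bound. Conversely,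
for `y ∈ [p₀, pₙ₋₁]` the curve is connected and joins `p₀` to `pₙ₋₁`, so it meets the line
through `y` orthogonal to the segment at some `x`; then `y` is the point of the segment nearest
to `x`, and `infDist y C ≤ dist x y = infDist x [p₀, pₙ₋₁]`. -/

open Metric

/-- The polygonal curve on vertices `p 0, …, p (n-1)`: the union of the segments
between consecutive vertices. -/
noncomputable def polyCurve {n : ℕ} (p : Fin n → EuclideanSpace ℝ (Fin 2)) :
    Set (EuclideanSpace ℝ (Fin 2)) :=
  ⋃ i : Fin (n - 1),
    segment ℝ (p ⟨i.1, by have := i.isLt; omega⟩) (p ⟨i.1 + 1, by have := i.isLt; omega⟩)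

open Set RealInnerProductSpace

theorem Convex.convexOn_infDist {E : Type*} [SeminormedAddCommGroup E] [NormedSpace ℝ E]
    {S : Set E} (hS : Convex ℝ S) : ConvexOn ℝ univ (infDist · S) := by
  refine ⟨convex_univ, fun x _ y _ a b ha hb hab => ?_⟩
  rcases S.eq_empty_or_nonempty with rfl | hne
  · simp
  refine le_of_forall_pos_le_add fun ε hε => ?_
  obtain ⟨zx, hzx, hx⟩ := (infDist_lt_iff hne).1 (lt_add_of_pos_right (infDist x S) hε)
  obtain ⟨zy, hzy, hy⟩ := (infDist_lt_iff hne).1 (lt_add_of_pos_right (infDist y S) hε)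
  calc infDist (a • x + b • y) S
      ≤ dist (a • x + b • y) (a • zx + b • zy) :=
        infDist_le_dist_of_mem (hS hzx hzy ha hb hab)
    _ ≤ dist (a • x) (a • zx) + dist (b • y) (b • zy) := dist_add_add_le _ _ _ _
    _ = a * dist x zx + b * dist y zy := by
      rw [dist_smul₀, dist_smul₀, Real.norm_of_nonneg ha, Real.norm_of_nonneg hb]
    _ ≤ a * (infDist x S + ε) + b * (infDist y S + ε) := by gcongr
    _ = a • infDist x S + b • infDist y S + ε := by
      simp only [smul_eq_mul]; linear_combination ε * hab

theorem isCompact_segment {E : Type*} [AddCommGroup E] [Module ℝ E] [TopologicalSpace E]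
    [IsTopologicalAddGroup E] [ContinuousSMul ℝ E] (a b : E) : IsCompact (segment ℝ a b) :=
  convexHull_pair (𝕜 := ℝ) a b ▸ (toFinite {a, b}).isCompact_convexHull ℝ

section InnerProductSpace

variable {F : Type*} [NormedAddCommGroup F] [InnerProductSpace ℝ F]

theorem dist_le_dist_of_inner_sub_eq_zero {x y z : F} (h : ⟪x - y, z - y⟫ = 0) :
    dist x y ≤ dist x z := by
  have hpyth := norm_sub_sq_eq_norm_sq_add_norm_sq_real h
  rw [sub_sub_sub_cancel_right] at hpyth
  rw [dist_eq_norm, dist_eq_norm]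
  refine (mul_self_le_mul_self_iff (norm_nonneg _) (norm_nonneg _)).2 ?_
  nlinarith [mul_self_nonneg ‖z - y‖]

theorem dist_le_infDist_segment {a b x y : F} (hy : y ∈ segment ℝ a b)
    (h : ⟪x - y, b - a⟫ = 0) : dist x y ≤ infDist x (segment ℝ a b) := by
  refine (le_infDist ⟨a, left_mem_segment ℝ a b⟩).2 fun z hz => ?_
  rw [segment_eq_image'] at hy hz
  obtain ⟨t, -, rfl⟩ := hy
  obtain ⟨s, -, rfl⟩ := hz
  refine dist_le_dist_of_inner_sub_eq_zero ?_
  rw [show a + s • (b - a) - (a + t • (b - a)) = (s - t) • (b - a) by module,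
    inner_smul_right, h, mul_zero]

theorem IsPreconnected.exists_inner_sub_eq_zero {C : Set F} (hC : IsPreconnected C) {a b y : F}
    (ha : a ∈ C) (hb : b ∈ C) (hy : y ∈ segment ℝ a b) : ∃ x ∈ C, ⟪x - y, b - a⟫ = 0 := by
  let f := innerSL ℝ (b - a)
  have hfy : f y ∈ segment ℝ (f a) (f b) :=
    image_segment ℝ f.toLinearMap.toAffineMap a b ▸ mem_image_of_mem f hy
  have hfC : OrdConnected (f '' C) :=
    isPreconnected_iff_ordConnected.1 (hC.image f f.continuous.continuousOn)
  obtain ⟨x, hx, hfx⟩ := hfC.uIcc_subset (mem_image_of_mem f ha) (mem_image_of_mem f hb)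
    (segment_subset_uIcc _ _ hfy)
  refine ⟨x, hx, ?_⟩
  rw [real_inner_comm, inner_sub_right]
  exact sub_eq_zero.2 hfx

theorem IsPreconnected.infDist_le_of_mem_segment {C : Set F} (hC : IsPreconnected C) {a b y : F}
    (ha : a ∈ C) (hb : b ∈ C) (hy : y ∈ segment ℝ a b) {r : ℝ}
    (hr : ∀ x ∈ C, infDist x (segment ℝ a b) ≤ r) : infDist y C ≤ r := by
  obtain ⟨x, hx, hxy⟩ := hC.exists_inner_sub_eq_zero ha hb hy
  calc infDist y C ≤ dist x y := dist_comm y x ▸ infDist_le_dist_of_mem hx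
    _ ≤ infDist x (segment ℝ a b) := dist_le_infDist_segment hy hxy
    _ ≤ r := hr x hx

end InnerProductSpace

section polyCurve

variable {n : ℕ} (p : Fin n → EuclideanSpace ℝ (Fin 2))

theorem mem_polyCurve (hn : 2 ≤ n) (i : Fin n) : p i ∈ polyCurve p := by
  by_cases hi : i.1 < n - 1
  · exact mem_iUnion.2 ⟨⟨i, hi⟩, left_mem_segment ℝ _ _⟩
  · rw [show i = ⟨n - 2 + 1, by omega⟩ from Fin.ext (by simp only; omega)]
    exact mem_iUnion.2 ⟨⟨n - 2, by omega⟩, right_mem_segment ℝ _ _⟩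

theorem isPreconnected_polyCurve : IsPreconnected (polyCurve p) := by
  refine IsPreconnected.iUnion_of_chain (fun i => (convex_segment _ _).isPreconnected) fun i => ?_
  refine ⟨_, right_mem_segment ℝ _ _, ?_⟩
  by_cases hi : IsMax i
  · rw [Order.succ_eq_iff_isMax.2 hi]
    exact right_mem_segment ℝ _ _
  · have hsucc : i.1 + 1 = (Order.succ i).1 :=
      Nat.covBy_iff_add_one_eq.1 (Fin.covBy_iff.1 (Order.covBy_succ_of_not_isMax hi))
    simp only [hsucc]
    exact left_mem_segment ℝ _ _

theorem isCompact_polyCurve : IsCompact (polyCurve p) :=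
  isCompact_iUnion fun _ => isCompact_segment _ _

theorem infDist_le_of_mem_polyCurve {S : Set (EuclideanSpace ℝ (Fin 2))} (hS : Convex ℝ S)
    {r : ℝ} (hr : ∀ i, infDist (p i) S ≤ r) {x : EuclideanSpace ℝ (Fin 2)}
    (hx : x ∈ polyCurve p) : infDist x S ≤ r := by
  obtain ⟨i, hi⟩ := mem_iUnion.1 hx
  exact (hS.convexOn_infDist.le_on_segment (mem_univ _) (mem_univ _) hi).trans
    (max_le (hr _) (hr _))

end polyCurve

theorem hausdorffDist_polyCurve_segment_eq_max
    (n : ℕ) (hn : 1 ≤ n) (p : Fin n → EuclideanSpace ℝ (Fin 2)) :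
    Metric.hausdorffDist (polyCurve p)
        (segment ℝ (p ⟨0, by omega⟩) (p ⟨n - 1, by omega⟩)) =
      Finset.univ.sup' (Finset.univ_nonempty_iff.mpr ⟨⟨0, by omega⟩⟩)
        (fun i : Fin n =>
          Metric.infDist (p i) (segment ℝ (p ⟨0, by omega⟩) (p ⟨n - 1, by omega⟩))) := by
  obtain rfl | hn2 : n = 1 ∨ 2 ≤ n := by omega
  · -- junk value: the curve is empty and `hausdorffDist ∅ _ = 0`; `p 0` lies on `[p 0, p 0]`
    simp [polyCurve]
  set S := segment ℝ (p ⟨0, by omega⟩) (p ⟨n - 1, by omega⟩)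
  set M := Finset.univ.sup' _ fun i => infDist (p i) S
  have hvertex (i : Fin n) : infDist (p i) S ≤ M :=
    Finset.le_sup' (fun j => infDist (p j) S) (Finset.mem_univ i)
  have hcurve (x) (hx : x ∈ polyCurve p) : infDist x S ≤ M :=
    infDist_le_of_mem_polyCurve p (convex_segment _ _) hvertex hx
  have hsegment (y) (hy : y ∈ S) : infDist y (polyCurve p) ≤ M :=
    (isPreconnected_polyCurve p).infDist_le_of_mem_segment (mem_polyCurve p hn2 _)
      (mem_polyCurve p hn2 _) hy hcurve
  have hfin : hausdorffEDist (polyCurve p) S ≠ ⊤ :=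
    hausdorffEDist_ne_top_of_nonempty_of_bounded ⟨_, mem_polyCurve p hn2 ⟨0, by omega⟩⟩
      ⟨_, left_mem_segment ℝ _ _⟩ (isCompact_polyCurve p).isBounded
      (isCompact_segment _ _).isBounded
  exact le_antisymm
    (hausdorffDist_le_of_infDist (infDist_nonneg.trans (hvertex ⟨0, by omega⟩)) hcurve hsegment)
    (Finset.sup'_le _ _ fun i _ => infDist_le_hausdorffDist_of_mem (mem_polyCurve p hn2 i) hfin)
end

section
/- Let n ≥ 2 and p : Fin n → ℝ² with p 0 ≠ p (n−1), let L = segment ℝ (p 0) (p (n−1)), and let γ(t) = (1−t) • p 0 + t • p (n−1) parametrize L. For every t ∈ [0, 1) there exist an index i with i + 1 ≤ n − 1 and parameters s, s' ∈ [0, 1] such that γ(s) is a nearest point of L to p i (i.e. dist (p i) (γ s) = infDist (p i) L), γ(s') is a nearest point of L to p (i+1), and s ≤ t < s'. -/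
/-!
Choose for every vertex a parameter of a nearest point on the segment, taking `0` at the first
vertex and `1` at the last. Since `0 ≤ t < 1`, the parameters start at or below `t` and end above
it, so some consecutive pair of vertices has parameters bracketing `t`.
-/

open Metric Set

theorem Nat.exists_le_lt_succ_of_le_of_lt {α : Type*} [LinearOrder α] (f : ℕ → α) {t : α}
    {m : ℕ} (h0 : f 0 ≤ t) (hm : t < f m) : ∃ i < m, f i ≤ t ∧ t < f (i + 1) := by
  induction m with
  | zero => exact absurd h0 hm.not_ge
  | succ m ih =>
    by_cases hle : f m ≤ t
    · exact ⟨m, m.lt_succ_self, hle, hm⟩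
    · obtain ⟨i, him, hi⟩ := ih (not_le.mp hle)
      exact ⟨i, him.trans m.lt_succ_self, hi⟩

section
variable {E : Type*} [SeminormedAddCommGroup E] [NormedSpace ℝ E]

def IsNearestSegmentParam (A B x : E) (s : ℝ) : Prop :=
  s ∈ Icc (0 : ℝ) 1 ∧ dist x ((1 - s) • A + s • B) = infDist x (segment ℝ A B)

theorem isCompact_segment_s3 (A B : E) : IsCompact (segment ℝ A B) := by
  rw [segment_eq_image]
  exact isCompact_Icc.image (by fun_prop)

theorem exists_isNearestSegmentParam (A B x : E) : ∃ s, IsNearestSegmentParam A B x s := by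
  obtain ⟨y, ⟨a, s, ha, hs, has, rfl⟩, hy⟩ :=
    (isCompact_segment_s3 A B).exists_infDist_eq_dist ⟨A, left_mem_segment ℝ A B⟩ x
  refine ⟨s, ⟨hs, by linarith⟩, ?_⟩
  rw [hy, ← eq_sub_of_add_eq has]

theorem isNearestSegmentParam_zero (A B : E) : IsNearestSegmentParam A B A 0 := by
  refine ⟨left_mem_Icc.mpr zero_le_one, ?_⟩
  rw [infDist_zero_of_mem (left_mem_segment ℝ A B)]
  simp

theorem isNearestSegmentParam_one (A B : E) : IsNearestSegmentParam A B B 1 := by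
  refine ⟨right_mem_Icc.mpr zero_le_one, ?_⟩
  rw [infDist_zero_of_mem (right_mem_segment ℝ A B)]
  simp

theorem exists_isNearestSegmentParam_le_lt (q : ℕ → E) {m : ℕ} (hm : 0 < m) {t : ℝ}
    (ht : t ∈ Ico (0 : ℝ) 1) :
    ∃ i < m, ∃ s s', IsNearestSegmentParam (q 0) (q m) (q i) s ∧
      IsNearestSegmentParam (q 0) (q m) (q (i + 1)) s' ∧ s ≤ t ∧ t < s' := by
  choose σ hσ using fun k => exists_isNearestSegmentParam (q 0) (q m) (q k)
  -- the endpoints get the parameters 0 and 1 even when `q 0 = q m`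
  let τ : ℕ → ℝ := fun k => if k = 0 then 0 else if k = m then 1 else σ k
  have hτ : ∀ k, IsNearestSegmentParam (q 0) (q m) (q k) (τ k) := by
    intro k
    by_cases h0 : k = 0
    · subst h0; simpa [τ] using isNearestSegmentParam_zero (q 0) (q m)
    by_cases hm : k = m
    · subst hm; simpa [τ, h0] using isNearestSegmentParam_one (q 0) (q k)
    simpa [τ, h0, hm] using hσ k
  obtain ⟨i, him, hi⟩ := Nat.exists_le_lt_succ_of_le_of_lt τ (t := t) (m := m)
    (by simpa [τ] using ht.1) (by simpa [τ, hm.ne'] using ht.2)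
  exact ⟨i, him, τ i, τ (i + 1), hτ i, hτ (i + 1), hi⟩

end

theorem exists_bracketing_nearest_points
    (n : ℕ) (hn : 2 ≤ n) (p : Fin n → EuclideanSpace ℝ (Fin 2))
    (t : ℝ) (ht : t ∈ Set.Ico (0 : ℝ) 1) :
    ∃ (i : ℕ) (hi : i + 1 ≤ n - 1) (s s' : ℝ),
      s ∈ Set.Icc (0 : ℝ) 1 ∧ s' ∈ Set.Icc (0 : ℝ) 1 ∧
      dist (p ⟨i, by omega⟩)
          ((1 - s) • p ⟨0, by omega⟩ + s • p ⟨n - 1, by omega⟩) =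
        Metric.infDist (p ⟨i, by omega⟩)
          (segment ℝ (p ⟨0, by omega⟩) (p ⟨n - 1, by omega⟩)) ∧
      dist (p ⟨i + 1, by omega⟩)
          ((1 - s') • p ⟨0, by omega⟩ + s' • p ⟨n - 1, by omega⟩) =
        Metric.infDist (p ⟨i + 1, by omega⟩)
          (segment ℝ (p ⟨0, by omega⟩) (p ⟨n - 1, by omega⟩)) ∧
      s ≤ t ∧ t < s' := by
  let q : ℕ → EuclideanSpace ℝ (Fin 2) := fun k => p ⟨min k (n - 1), by omega⟩
  have hq : ∀ k (hk : k ≤ n - 1), q k = p ⟨k, by omega⟩ := fun k hk => by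
    simp only [q, min_eq_left hk]
  obtain ⟨i, hi, s, s', ⟨hs, hds⟩, ⟨hs', hds'⟩, hst⟩ :=
    exists_isNearestSegmentParam_le_lt q (m := n - 1) (by omega) ht
  rw [hq 0 (Nat.zero_le _), hq (n - 1) le_rfl] at hds hds'
  rw [hq i hi.le] at hds
  rw [hq (i + 1) hi] at hds'
  exact ⟨i, hi, s, s', hs, hs', hds, hds', hst⟩
end

section
/- Let c ∈ ℝ², r ≥ 0, ε > 0, and p, q ∈ ℝ². Then every point of the closed disk of radius r around c is within distance ε of the segment pq if and only if that segment meets the closed disk of radius ε − r around c: (∀ p' ∈ closedBall c r, infDist p' (segment ℝ p q) ≤ ε) ↔ (segment ℝ p q ∩ closedBall c (ε − r)).Nonempty. -/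
/-!
Since the segment `S` is compact, the right-hand side says `infDist c S ≤ ε - r`, and then the
triangle inequality for `infDist` gives the left-hand side. Conversely, there is a unit vector `u`
with `infDist c S ≤ ⟪u, c - y⟫` for every `y ∈ S`: the direction from the nearest point of `S` to
`c`, or a unit normal of the segment if `c ∈ S`. By Cauchy–Schwarz the point `c + r • u` of the
disk is at distance at least `infDist c S + r` from `S`.
-/

open Metric Module
open scoped RealInnerProductSpace

variable {E : Type*} [NormedAddCommGroup E] [InnerProductSpace ℝ E]

theorem IsCompact.inter_closedBall_nonempty_iff {α : Type*} [PseudoMetricSpace α] {s : Set α}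
    (hs : IsCompact s) (hne : s.Nonempty) (x : α) (δ : ℝ) :
    (s ∩ closedBall x δ).Nonempty ↔ infDist x s ≤ δ := by
  constructor
  · rintro ⟨y, hy, hyx⟩
    exact (infDist_le_dist_of_mem hy).trans (mem_closedBall'.1 hyx)
  · intro h
    obtain ⟨y, hy, hxy⟩ := hs.exists_infDist_eq_dist hne x
    exact ⟨y, hy, mem_closedBall'.2 (hxy ▸ h)⟩

theorem isCompact_segment_s9 (p q : E) : IsCompact (segment ℝ p q) := by
  rw [← convexHull_pair]
  exact (Set.toFinite _).isCompact_convexHull ℝ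

theorem add_le_infDist_add_smul {s : Set E} (hs : s.Nonempty) {x u : E} (hu : ‖u‖ = 1) {d : ℝ}
    (hd : ∀ y ∈ s, d ≤ ⟪u, x - y⟫) (r : ℝ) : d + r ≤ infDist (x + r • u) s := by
  refine (le_infDist hs).2 fun y hy => ?_
  calc d + r ≤ ⟪u, x - y⟫ + ⟪u, r • u⟫ := by
        rw [real_inner_smul_right, real_inner_self_eq_norm_sq, hu]
        linarith [hd y hy]
    _ = ⟪u, x + r • u - y⟫ := by rw [← inner_add_right]; congr 1; abel
    _ ≤ ‖u‖ * ‖x + r • u - y‖ := real_inner_le_norm _ _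
    _ = dist (x + r • u) y := by rw [hu, one_mul, dist_eq_norm]

theorem exists_norm_eq_one_inner_eq_zero (hE : 2 ≤ finrank ℝ E) (v : E) :
    ∃ u : E, ‖u‖ = 1 ∧ ⟪u, v⟫ = 0 := by
  have : FiniteDimensional ℝ E := .of_finrank_pos (by omega)
  have hK : (ℝ ∙ v) ≠ ⊤ := by
    intro h
    have h1 : finrank ℝ (ℝ ∙ v) ≤ 1 := by
      simpa using finrank_span_le_card ({v} : Set E)
    rw [h, finrank_top] at h1
    omega
  obtain ⟨w, hw, hw0⟩ := Submodule.exists_mem_ne_zero_of_ne_bot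
    (mt Submodule.orthogonal_eq_bot_iff.1 hK)
  refine ⟨‖w‖⁻¹ • w, norm_smul_inv_norm hw0, ?_⟩
  rw [real_inner_smul_left, Submodule.mem_orthogonal_singleton_iff_inner_left.1 hw, mul_zero]

theorem inner_sub_eq_zero_of_mem_segment {u p q x y : E} (hu : ⟪u, q - p⟫ = 0)
    (hx : x ∈ segment ℝ p q) (hy : y ∈ segment ℝ p q) : ⟪u, x - y⟫ = 0 := by
  rw [segment_eq_image'] at hx hy
  obtain ⟨s, -, rfl⟩ := hx
  obtain ⟨t, -, rfl⟩ := hy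
  rw [show p + s • (q - p) - (p + t • (q - p)) = (s - t) • (q - p) by module,
    real_inner_smul_right, hu, mul_zero]

theorem norm_sub_le_inner_normalize {x y z : E} (hxy : x ≠ y) (h : ⟪x - y, z - y⟫ ≤ 0) :
    ‖x - y‖ ≤ ⟪NormedSpace.normalize (x - y), x - z⟫ := by
  have hpos : 0 < ‖x - y‖ := norm_pos_iff.2 (sub_ne_zero.2 hxy)
  have key : ‖x - y‖ ^ 2 ≤ ⟪x - y, x - z⟫ := by
    rw [show x - z = (x - y) - (z - y) by abel, inner_sub_right, real_inner_self_eq_norm_sq]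
    linarith
  rw [NormedSpace.normalize, real_inner_smul_left, le_inv_mul_iff₀ hpos]
  nlinarith

theorem exists_norm_eq_one_infDist_segment_le_inner (hE : 2 ≤ finrank ℝ E) (p q x : E) :
    ∃ u : E, ‖u‖ = 1 ∧ ∀ y ∈ segment ℝ p q, infDist x (segment ℝ p q) ≤ ⟪u, x - y⟫ := by
  obtain ⟨z, hz, hxz⟩ := (isCompact_segment_s9 p q).exists_infDist_eq_dist
    ⟨p, left_mem_segment ℝ p q⟩ x
  rw [hxz, dist_eq_norm]
  by_cases hx : x = z
  · obtain ⟨u, hu, hperp⟩ := exists_norm_eq_one_inner_eq_zero hE (q - p)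
    subst hx
    refine ⟨u, hu, fun y hy => ?_⟩
    rw [sub_self, norm_zero, inner_sub_eq_zero_of_mem_segment hperp hz hy]
  · have hproj : ∀ y ∈ segment ℝ p q, ⟪x - z, y - z⟫ ≤ 0 := by
      refine (norm_eq_iInf_iff_real_inner_le_zero (convex_segment p q) hz).1 ?_
      rw [← dist_eq_norm, ← hxz, infDist_eq_iInf]
      simp only [dist_eq_norm]
    exact ⟨_, NormedSpace.norm_normalize_eq_one_iff.2 (sub_ne_zero.2 hx),
      fun y hy => norm_sub_le_inner_normalize hx (hproj y hy)⟩

theorem ball_within_eps_of_segment_iff_stab_general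
    (c : EuclideanSpace ℝ (Fin 2)) (r ε : ℝ) (hr : 0 ≤ r)
    (p q : EuclideanSpace ℝ (Fin 2)) :
    (∀ p' ∈ Metric.closedBall c r, Metric.infDist p' (segment ℝ p q) ≤ ε) ↔
      (segment ℝ p q ∩ Metric.closedBall c (ε - r)).Nonempty := by
  have hne : (segment ℝ p q).Nonempty := ⟨p, left_mem_segment ℝ p q⟩
  rw [(isCompact_segment_s9 p q).inter_closedBall_nonempty_iff hne]
  constructor
  · intro h
    obtain ⟨u, hu, hsupp⟩ := exists_norm_eq_one_infDist_segment_le_inner (by simp) p q c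
    have hmem : c + r • u ∈ closedBall c r := by
      simp [norm_smul, hu, abs_of_nonneg hr]
    linarith [add_le_infDist_add_smul hne hu hsupp r, h _ hmem]
  · intro h p' hp'
    linarith [infDist_le_infDist_add_dist (x := p') (y := c) (s := segment ℝ p q),
      mem_closedBall.1 hp']

theorem ball_within_eps_of_segment_iff_stab
    (c : EuclideanSpace ℝ (Fin 2)) (r ε : ℝ) (hr : 0 ≤ r) (hε : 0 < ε)
    (p q : EuclideanSpace ℝ (Fin 2)) :
    (∀ p' ∈ Metric.closedBall c r, Metric.infDist p' (segment ℝ p q) ≤ ε) ↔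
      (segment ℝ p q ∩ Metric.closedBall c (ε - r)).Nonempty :=
  ball_within_eps_of_segment_iff_stab_general c r ε hr p q
end
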